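/- For every n ≥ 1 and every sequence of eight pairwise coprime integers a₁,…,a₈, every (2n+1)×(2n+1) integer matrix can be written as Σ_{i=1}^{8} aᵢAᵢ² with Aᵢ ∈ M_{2n+1}(ℤ). Hence f(2n+1) ≤ 8. -/

import Mathlib

/-!
Split a matrix of size `2n + 1` into blocks `[[X, B], [C, Y]]` of sizes `n` and `n + 1`, and let
`P, P'` be the `n × (n + 1)` selection matrices of `Fin.castSucc` and `Fin.succ`. Every pair
`(U, V)` with `tr U = tr V` is `(P Q + P' Q', Q P + Q' P')` for some `Q, Q'`: modulo such pairs,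
a matrix unit `E_ij` of size `n + 1` slides along its diagonal until it leaves through the
border, so only the trace survives.

Since `[[0, P], [u Q, W]]² = [[u P Q, P W], [u W Q, u Q P + W²]]`, a coprime pair `a, b` with
`u a + v b = 1` yields `[[P Q, *], [*, Q P + a W² + b W'²]]`, and the extra term can have any
trace because every integer is the trace of the square of an integer matrix of size `≥ 2`.
Two such pairs give the diagonal blocks up to scalars; the two remaining coprime pairs, applied
to the idempotents `[[1, u B], [0, 0]]` and `[[0, 0], [u C, 1]]`, supply those scalars and absorb
the off-diagonal blocks.
-/

open Matrix

section ShiftPair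

variable {R : Type*} [Ring R] {n : ℕ}

variable (R n) in
def castSuccSelect : Matrix (Fin n) (Fin (n + 1)) R :=
  of fun i j => if j = i.castSucc then 1 else 0

variable (R n) in
def succSelect : Matrix (Fin n) (Fin (n + 1)) R :=
  of fun i j => if j = i.succ then 1 else 0

theorem castSuccSelect_mul_single_castSucc (a b : Fin n) (c : R) :
    castSuccSelect R n * single a.castSucc b c = single a b c := by
  ext i j
  by_cases hj : j = b
  · subst hj; simp [castSuccSelect, single_apply]
  · simp [hj, Ne.symm hj]

theorem castSuccSelect_mul_single_last (b : Fin n) (c : R) :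
    castSuccSelect R n * single (Fin.last n) b c = 0 := by
  ext i j
  by_cases hj : j = b
  · subst hj; simp [castSuccSelect, eq_comm, Fin.castSucc_ne_last]
  · simp [hj]

theorem single_mul_castSuccSelect (a : Fin (n+1)) (b : Fin n) (c : R) :
    single a b c * castSuccSelect R n = single a b.castSucc c := by
  ext i j
  refine Fin.lastCases ?_ (fun k => ?_) j <;>
    simp [Matrix.mul_apply, castSuccSelect, single_apply, ite_and, eq_comm]

theorem succSelect_mul_single_succ (a b : Fin n) (c : R) :
    succSelect R n * single a.succ b c = single a b c := by
  ext i j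
  by_cases hj : j = b
  · subst hj; simp [succSelect, single_apply]
  · simp [hj, Ne.symm hj]

theorem succSelect_mul_single_zero (b : Fin n) (c : R) :
    succSelect R n * single (0 : Fin (n + 1)) b c = 0 := by
  ext i j
  by_cases hj : j = b
  · subst hj; simp [succSelect, eq_comm, Fin.succ_ne_zero]
  · simp [hj]

theorem single_mul_succSelect (a : Fin (n+1)) (b : Fin n) (c : R) :
    single a b c * succSelect R n = single a b.succ c := by
  ext i j
  refine Fin.cases ?_ (fun k => ?_) j <;>
    simp [Matrix.mul_apply, succSelect, single_apply, ite_and, eq_comm]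

theorem castSuccSelect_mul_transpose : castSuccSelect R n * (castSuccSelect R n)ᵀ = 1 := by
  ext i j; simp [Matrix.mul_apply, castSuccSelect, one_apply, eq_comm]

variable (R n) in
def shiftPairHom :
    Matrix (Fin (n + 1)) (Fin n) R × Matrix (Fin (n + 1)) (Fin n) R →+
      Matrix (Fin n) (Fin n) R × Matrix (Fin (n + 1)) (Fin (n + 1)) R :=
  AddMonoidHom.mk'
    (fun Q => (castSuccSelect R n * Q.1 + succSelect R n * Q.2,
      Q.1 * castSuccSelect R n + Q.2 * succSelect R n))
    (fun Q Q' => by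
      simp only [Prod.fst_add, Prod.snd_add, Matrix.mul_add, Matrix.add_mul, Prod.mk_add_mk,
        add_add_add_comm])

theorem shiftPairHom_apply (Q Q' : Matrix (Fin (n + 1)) (Fin n) R) :
    shiftPairHom R n (Q, Q') = (castSuccSelect R n * Q + succSelect R n * Q',
      Q * castSuccSelect R n + Q' * succSelect R n) := rfl

variable (R n) in
def rightShiftSubgroup :
    AddSubgroup (Matrix (Fin (n + 1)) (Fin (n + 1)) R) :=
  (shiftPairHom R n).range.comap (AddMonoidHom.inr _ _)

theorem single_last_castSucc_mem_rightShiftSubgroup (b : Fin n) (c : R) :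
    single (Fin.last n) b.castSucc c ∈ rightShiftSubgroup R n :=
  ⟨(single (Fin.last n) b c, 0), by
    simp [shiftPairHom_apply, castSuccSelect_mul_single_last, single_mul_castSuccSelect]⟩

theorem single_zero_succ_mem_rightShiftSubgroup (b : Fin n) (c : R) :
    single 0 b.succ c ∈ rightShiftSubgroup R n :=
  ⟨(0, single 0 b c), by
    simp [shiftPairHom_apply, succSelect_mul_single_zero, single_mul_succSelect]⟩

theorem single_castSucc_sub_single_succ_mem_rightShiftSubgroup (a b : Fin n) (c : R) :
    single a.castSucc b.castSucc c - single a.succ b.succ c ∈ rightShiftSubgroup R n :=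
  ⟨(single a.castSucc b c, -single a.succ b c), by
    simp [shiftPairHom_apply, castSuccSelect_mul_single_castSucc, succSelect_mul_single_succ,
      single_mul_castSuccSelect, single_mul_succSelect, Matrix.mul_neg, Matrix.neg_mul,
      sub_eq_add_neg]⟩

theorem mk_transpose_mul_mul_castSuccSelect_mem_range (U : Matrix (Fin n) (Fin n) R) :
    (U, (castSuccSelect R n)ᵀ * U * castSuccSelect R n) ∈ (shiftPairHom R n).range :=
  ⟨((castSuccSelect R n)ᵀ * U, 0), by
    simp [shiftPairHom_apply, ← Matrix.mul_assoc, castSuccSelect_mul_transpose]⟩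

/- Modulo `rightShiftSubgroup`, `single (i + 1) (j + 1) c ≡ single i j c`; off the diagonal this
reaches the last row (below it) or the first row (above it), both in the subgroup. -/
theorem single_mem_rightShiftSubgroup_of_lt {i j : Fin (n + 1)} (hji : j < i) (c : R) :
    single i j c ∈ rightShiftSubgroup R n := by
  induction i using Fin.reverseInduction generalizing j with
  | last =>
    obtain ⟨b, rfl⟩ := Fin.exists_castSucc_eq.mpr (Fin.ne_last_of_lt hji)
    exact single_last_castSucc_mem_rightShiftSubgroup b c
  | cast a ih =>
    obtain ⟨b, rfl⟩ := Fin.exists_castSucc_eq.mpr (Fin.ne_last_of_lt hji)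
    have hba : b < a := Fin.castSucc_lt_castSucc_iff.mp hji
    simpa using add_mem (single_castSucc_sub_single_succ_mem_rightShiftSubgroup a b c)
      (ih (Fin.succ_lt_succ_iff.mpr hba))

theorem single_mem_rightShiftSubgroup_of_gt {i j : Fin (n + 1)} (hij : i < j) (c : R) :
    single i j c ∈ rightShiftSubgroup R n := by
  induction i using Fin.induction generalizing j with
  | zero =>
    obtain ⟨b, rfl⟩ := Fin.exists_succ_eq.mpr (Fin.ne_zero_of_lt hij)
    exact single_zero_succ_mem_rightShiftSubgroup b c
  | succ a ih =>
    obtain ⟨b, rfl⟩ := Fin.exists_succ_eq.mpr (Fin.ne_zero_of_lt hij)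
    have hab : a < b := Fin.succ_lt_succ_iff.mp hij
    simpa using sub_mem (ih (Fin.castSucc_lt_castSucc_iff.mpr hab))
      (single_castSucc_sub_single_succ_mem_rightShiftSubgroup a b c)

theorem single_sub_single_zero_mem_rightShiftSubgroup (i : Fin (n + 1)) (c : R) :
    single i i c - single 0 0 c ∈ rightShiftSubgroup R n := by
  induction i using Fin.induction with
  | zero => simp
  | succ a ih =>
    simpa using sub_mem ih (single_castSucc_sub_single_succ_mem_rightShiftSubgroup a a c)

theorem sub_single_trace_mem_rightShiftSubgroup (V : Matrix (Fin (n + 1)) (Fin (n + 1)) R) :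
    V - single 0 0 V.trace ∈ rightShiftSubgroup R n := by
  induction V using Matrix.induction_on' with
  | h_zero => simp
  | h_add p q hp hq => simpa [trace_add, single_add, add_sub_add_comm] using add_mem hp hq
  | h_std_basis i j c =>
    rcases lt_trichotomy i j with hij | rfl | hji
    · simpa [trace_single_eq_of_ne i j c hij.ne] using single_mem_rightShiftSubgroup_of_gt hij c
    · simpa using single_sub_single_zero_mem_rightShiftSubgroup i c
    · simpa [trace_single_eq_of_ne i j c hji.ne'] using single_mem_rightShiftSubgroup_of_lt hji c

theorem trace_transpose_mul_mul_castSuccSelect (U : Matrix (Fin n) (Fin n) R) :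
    ((castSuccSelect R n)ᵀ * U * castSuccSelect R n).trace = U.trace := by
  simp [trace, Matrix.mul_apply, castSuccSelect, Fin.sum_univ_castSucc, eq_comm,
    Fin.castSucc_ne_last]

theorem exists_shiftPairHom_eq_of_trace_eq (U : Matrix (Fin n) (Fin n) R)
    (V : Matrix (Fin (n + 1)) (Fin (n + 1)) R) (h : U.trace = V.trace) :
    ∃ Q Q' : Matrix (Fin (n + 1)) (Fin n) R,
      castSuccSelect R n * Q + succSelect R n * Q' = U ∧
        Q * castSuccSelect R n + Q' * succSelect R n = V := by
  set V₀ := (castSuccSelect R n)ᵀ * U * castSuccSelect R n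
  have htr : (V - V₀).trace = 0 := by
    rw [trace_sub, trace_transpose_mul_mul_castSuccSelect, h, sub_self]
  have hmem := add_mem (mk_transpose_mul_mul_castSuccSelect_mem_range U)
    (AddSubgroup.mem_comap.mp (sub_single_trace_mem_rightShiftSubgroup (V - V₀)))
  rw [htr, single_zero, sub_zero, AddMonoidHom.inr_apply, Prod.mk_add_mk, add_zero,
    add_sub_cancel] at hmem
  obtain ⟨⟨Q, Q'⟩, hQ⟩ := hmem
  exact ⟨Q, Q', congrArg Prod.fst hQ, congrArg Prod.snd hQ⟩

end ShiftPair

section Blocks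

variable {m k R : Type*} [Fintype m] [Fintype k] [DecidableEq m] [DecidableEq k]

theorem fromBlocks_one_zero_sq [Ring R] (B : Matrix m k R) :
    fromBlocks (1 : Matrix m m R) B 0 (0 : Matrix k k R) ^ 2 = fromBlocks 1 B 0 0 := by
  simp [sq, fromBlocks_multiply]

theorem fromBlocks_zero_one_sq [Ring R] (C : Matrix k m R) :
    fromBlocks (0 : Matrix m m R) 0 C (1 : Matrix k k R) ^ 2 = fromBlocks 0 0 C 1 := by
  simp [sq, fromBlocks_multiply]

theorem fromBlocks_zero_sq [Ring R] (P : Matrix m k R) (Q : Matrix k m R) (W : Matrix k k R) :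
    fromBlocks 0 P Q W ^ 2 = fromBlocks (P * Q) (P * W) (W * Q) (Q * P + W * W) := by
  simp [sq, fromBlocks_multiply]

variable [CommRing R] {a b : R}

theorem exists_smul_sq_add_smul_sq_eq_fromBlocks_one_left (hab : IsCoprime a b)
    (B : Matrix m k R) :
    ∃ A A' : Matrix (m ⊕ k) (m ⊕ k) R,
      a • A ^ 2 + b • A' ^ 2 = fromBlocks ((a + b) • 1) B 0 0 := by
  obtain ⟨u, v, huv⟩ := hab
  refine ⟨fromBlocks 1 (u • B) 0 0, fromBlocks 1 (v • B) 0 0, ?_⟩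
  rw [fromBlocks_one_zero_sq, fromBlocks_one_zero_sq, fromBlocks_smul, fromBlocks_smul,
    fromBlocks_add]
  congr 1
  · rw [add_smul]
  · rw [smul_smul, smul_smul, ← add_smul, mul_comm a, mul_comm b, huv, one_smul]
  · simp
  · simp

theorem exists_smul_sq_add_smul_sq_eq_fromBlocks_one_right (hab : IsCoprime a b)
    (C : Matrix k m R) :
    ∃ A A' : Matrix (m ⊕ k) (m ⊕ k) R,
      a • A ^ 2 + b • A' ^ 2 = fromBlocks 0 0 C ((a + b) • 1) := by
  obtain ⟨u, v, huv⟩ := hab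
  refine ⟨fromBlocks 0 0 (u • C) 1, fromBlocks 0 0 (v • C) 1, ?_⟩
  rw [fromBlocks_zero_one_sq, fromBlocks_zero_one_sq, fromBlocks_smul, fromBlocks_smul,
    fromBlocks_add]
  congr 1
  · simp
  · simp
  · rw [smul_smul, smul_smul, ← add_smul, mul_comm a, mul_comm b, huv, one_smul]
  · rw [add_smul]

theorem exists_smul_sq_add_smul_sq_eq_fromBlocks_mul (hab : IsCoprime a b)
    (P : Matrix m k R) (Q : Matrix k m R) (W W' : Matrix k k R) :
    ∃ (A A' : Matrix (m ⊕ k) (m ⊕ k) R) (B : Matrix m k R) (C : Matrix k m R),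
      a • A ^ 2 + b • A' ^ 2 =
        fromBlocks (P * Q) B C (Q * P + (a • (W * W) + b • (W' * W'))) := by
  obtain ⟨u, v, huv⟩ := hab
  refine ⟨fromBlocks 0 P (u • Q) W, fromBlocks 0 P (v • Q) W', a • (P * W) + b • (P * W'),
    a • (W * (u • Q)) + b • (W' * (v • Q)), ?_⟩
  rw [fromBlocks_zero_sq, fromBlocks_zero_sq, fromBlocks_smul, fromBlocks_smul, fromBlocks_add]
  congr 1
  · simp only [Matrix.mul_smul, smul_smul, ← add_smul, mul_comm a, mul_comm b, huv, one_smul]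
  · simp only [Matrix.smul_mul, smul_smul, smul_add]
    rw [add_add_add_comm, ← add_smul, mul_comm a, mul_comm b, huv, one_smul]

end Blocks

theorem exists_trace_mul_self_eq {ι : Type*} [Fintype ι] [DecidableEq ι] {i j : ι}
    (hij : i ≠ j) (z : ℤ) : ∃ W : Matrix ι ι ℤ, (W * W).trace = z := by
  -- the trace of the square is `(z % 2) ^ 2 + 2 * (z / 2)`
  refine ⟨single i i (z % 2) + single i j 1 + single j i (z / 2), ?_⟩
  simp [add_mul, mul_add, single_mul_single_same, single_mul_single_of_ne, hij, hij.symm,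
    trace_single_eq_of_ne]
  rcases Int.emod_two_eq_zero_or_one z with h | h <;> rw [h] <;> omega

theorem exists_trace_smul_mul_self_add_smul_mul_self_eq {ι : Type*} [Fintype ι] [DecidableEq ι]
    {i j : ι} (hij : i ≠ j) {a b : ℤ} (hab : IsCoprime a b) (z : ℤ) :
    ∃ W W' : Matrix ι ι ℤ, (a • (W * W) + b • (W' * W')).trace = z := by
  obtain ⟨u, v, huv⟩ := hab
  obtain ⟨W, hW⟩ := exists_trace_mul_self_eq hij (u * z)
  obtain ⟨W', hW'⟩ := exists_trace_mul_self_eq hij (v * z)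
  refine ⟨W, W', ?_⟩
  rw [trace_add, trace_smul, trace_smul, hW, hW', smul_eq_mul, smul_eq_mul]
  linear_combination z * huv

theorem exists_eq_sum_smul_sq_of_isCoprime {n : ℕ} (hn : 0 < n) (a : Fin 8 → ℤ)
    (h01 : IsCoprime (a 0) (a 1)) (h23 : IsCoprime (a 2) (a 3))
    (h45 : IsCoprime (a 4) (a 5)) (h67 : IsCoprime (a 6) (a 7))
    (M : Matrix (Fin n ⊕ Fin (n + 1)) (Fin n ⊕ Fin (n + 1)) ℤ) :
    ∃ A : Fin 8 → Matrix (Fin n ⊕ Fin (n + 1)) (Fin n ⊕ Fin (n + 1)) ℤ,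
      M = ∑ i, a i • A i ^ 2 := by
  obtain ⟨W, W', hW⟩ := exists_trace_smul_mul_self_add_smul_mul_self_eq
    (Fin.ne_of_val_ne (by simpa using hn.ne) : (0 : Fin (n + 1)) ≠ Fin.last n) h45
    ((M.toBlocks₂₂ - (a 2 + a 3) • 1).trace - (M.toBlocks₁₁ - (a 0 + a 1) • 1).trace)
  obtain ⟨Q, Q', hU, hV⟩ := exists_shiftPairHom_eq_of_trace_eq
    (M.toBlocks₁₁ - (a 0 + a 1) • 1)
    (M.toBlocks₂₂ - (a 2 + a 3) • 1 - (a 4 • (W * W) + a 5 • (W' * W')))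
    (by rw [trace_sub _ (_ + _), hW, sub_sub_cancel])
  obtain ⟨A₄, A₅, B₄₅, C₄₅, h₄₅⟩ :=
    exists_smul_sq_add_smul_sq_eq_fromBlocks_mul h45 (castSuccSelect ℤ n) Q W W'
  obtain ⟨A₆, A₇, B₆₇, C₆₇, h₆₇⟩ :=
    exists_smul_sq_add_smul_sq_eq_fromBlocks_mul h67 (succSelect ℤ n) Q' 0 0
  obtain ⟨A₀, A₁, h₀₁⟩ :=
    exists_smul_sq_add_smul_sq_eq_fromBlocks_one_left h01 (M.toBlocks₁₂ - B₄₅ - B₆₇)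
  obtain ⟨A₂, A₃, h₂₃⟩ :=
    exists_smul_sq_add_smul_sq_eq_fromBlocks_one_right h23 (M.toBlocks₂₁ - C₄₅ - C₆₇)
  refine ⟨![A₀, A₁, A₂, A₃, A₄, A₅, A₆, A₇], ?_⟩
  calc M = fromBlocks M.toBlocks₁₁ M.toBlocks₁₂ M.toBlocks₂₁ M.toBlocks₂₂ :=
        (fromBlocks_toBlocks M).symm
    _ = (a 0 • A₀ ^ 2 + a 1 • A₁ ^ 2) + (a 2 • A₂ ^ 2 + a 3 • A₃ ^ 2)
          + (a 4 • A₄ ^ 2 + a 5 • A₅ ^ 2) + (a 6 • A₆ ^ 2 + a 7 • A₇ ^ 2) := by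
      rw [h₀₁, h₂₃, h₄₅, h₆₇, fromBlocks_add, fromBlocks_add, fromBlocks_add]
      simp only [Matrix.mul_zero, smul_zero, add_zero]
      congr 1
      · linear_combination (norm := abel) -hU
      · abel
      · abel
      · linear_combination (norm := abel) -hV
    _ = ∑ i, a i • ![A₀, A₁, A₂, A₃, A₄, A₅, A₆, A₇] i ^ 2 := by
      simp only [Fin.sum_univ_eight]
      abel

theorem stmt16 (n : ℕ) (hn : 1 ≤ n) (a : Fin 8 → ℤ)
    (hco : ∀ i j, i ≠ j → IsCoprime (a i) (a j)) :
    ∀ M : Matrix (Fin (2 * n + 1)) (Fin (2 * n + 1)) ℤ,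
      ∃ A : Fin 8 → Matrix (Fin (2 * n + 1)) (Fin (2 * n + 1)) ℤ, M = ∑ i, a i • (A i) ^ 2 := by
  intro M
  let φ := reindexAlgEquiv ℤ ℤ (finSumFinEquiv.trans (finCongr (by omega)) :
    Fin n ⊕ Fin (n + 1) ≃ Fin (2 * n + 1))
  obtain ⟨A, hA⟩ := exists_eq_sum_smul_sq_of_isCoprime hn a (hco 0 1 (by decide))
    (hco 2 3 (by decide)) (hco 4 5 (by decide)) (hco 6 7 (by decide)) (φ.symm M)
  refine ⟨fun i => φ (A i), ?_⟩
  rw [← φ.apply_symm_apply M, hA]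
  simp only [map_sum, map_smul, map_pow]
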